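/- Let 𝔤 be the centrally extended (1+1) Poincaré Lie algebra, and let δ : 𝔤 → 𝔤 ⊗ 𝔤 be the 1-cocycle determined by real parameters α, β₁, …, β₈ via δ(M) = α M∧P₁ + α P₀∧P₁, δ(P₀) = β₁ M∧P₀ + β₂ M∧P₁ + β₃ M∧K + β₄ P₀∧P₁ + β₃ P₀∧K, δ(P₁) = (β₂−β₄) M∧P₀ + β₅ M∧P₁ − (β₁−β₅) P₀∧P₁ + β₃ P₁∧K, δ(K) = β₆ M∧P₀ + β₇ M∧P₁ − (β₁−β₅) M∧K + β₈ P₀∧P₁ − (β₁−β₅) P₀∧K − (α+β₄) P₁∧K. Then δ satisfies the co-Jacobi condition if and only if the following six equations hold: αβ₁ = 0, αβ₃ = 0, β₁β₈ = 0, β₃β₈ = 0, β₁β₂ − (β₂−β₄)β₅ + β₃β₇ = 0, and (α+β₄)(β₂−β₄) + β₁(β₁−β₅) + β₃β₆ = 0. -/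

import Mathlib

/-- The wedge `X ∧ Y = X ⊗ Y - Y ⊗ X` in `L ⊗ L`. -/
noncomputable def wedge {L : Type*} [AddCommGroup L] [Module ℝ L] (X Y : L) :
    TensorProduct ℝ L L := X ⊗ₜ[ℝ] Y - Y ⊗ₜ[ℝ] X

/-- The bracket on the dual space `L*` induced by a linear map `δ : L → L ⊗ L`:
`⟨[ξ,η]*, X⟩ = (ξ ⊗ η)(δ X)`. -/
noncomputable def dualBr {L : Type*} [AddCommGroup L] [Module ℝ L]
    (δ : L →ₗ[ℝ] TensorProduct ℝ L L) (ξ η : Module.Dual ℝ L) : Module.Dual ℝ L :=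
  (TensorProduct.lift ((LinearMap.mul ℝ ℝ).compl₁₂ ξ η)).comp δ

/-- The co-Jacobi condition: the induced bracket on the dual space is a Lie bracket
(skew-symmetry and the Jacobi identity). -/
def CoJacobi {L : Type*} [AddCommGroup L] [Module ℝ L]
    (δ : L →ₗ[ℝ] TensorProduct ℝ L L) : Prop :=
  (∀ ξ η, dualBr δ ξ η = - dualBr δ η ξ) ∧
  (∀ ξ η ζ, dualBr δ (dualBr δ ξ η) ζ + dualBr δ (dualBr δ η ζ) ξ
      + dualBr δ (dualBr δ ζ ξ) η = 0)

set_option maxHeartbeats 1000000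

lemma lift_wedge {L : Type*} [AddCommGroup L] [Module ℝ L]
    (ξ η : Module.Dual ℝ L) (X Y : L) :
    TensorProduct.lift ((LinearMap.mul ℝ ℝ).compl₁₂ ξ η) (wedge X Y)
      = ξ X * η Y - ξ Y * η X := by
  simp [wedge]

lemma dualBr_apply {L : Type*} [AddCommGroup L] [Module ℝ L]
    (δ : L →ₗ[ℝ] TensorProduct ℝ L L) (ξ η : Module.Dual ℝ L) (X : L) :
    dualBr δ ξ η X = TensorProduct.lift ((LinearMap.mul ℝ ℝ).compl₁₂ ξ η) (δ X) := rfl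

/-- On the centrally extended (1+1) Poincaré Lie algebra (basis
`M = b 0`, `P₀ = b 1`, `P₁ = b 2`, `K = b 3`), the 1-cocycle `δ` determined by the
parameters `α, β₁, …, β₈` satisfies the co-Jacobi condition if and only if the six
stated quadratic equations hold. -/
theorem statement7
    {L : Type*} [AddCommGroup L] [Module ℝ L]
    (br : L →ₗ[ℝ] L →ₗ[ℝ] L)
    (hanti : ∀ X Y : L, br X Y = - br Y X)
    (hjac : ∀ X Y Z : L, br (br X Y) Z + br (br Y Z) X + br (br Z X) Y = 0)
    (b : Module.Basis (Fin 4) ℝ L)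
    (hbrM : ∀ X : L, br (b 0) X = 0)
    (hbr12 : br (b 1) (b 2) = 0)
    (hbr31 : br (b 3) (b 1) = b 2)
    (hbr32 : br (b 3) (b 2) = b 0 + b 1)
    (α β₁ β₂ β₃ β₄ β₅ β₆ β₇ β₈ : ℝ)
    (δ : L →ₗ[ℝ] TensorProduct ℝ L L)
    (hδ0 : δ (b 0) = α • wedge (b 0) (b 2) + α • wedge (b 1) (b 2))
    (hδ1 : δ (b 1) = β₁ • wedge (b 0) (b 1) + β₂ • wedge (b 0) (b 2)
      + β₃ • wedge (b 0) (b 3) + β₄ • wedge (b 1) (b 2) + β₃ • wedge (b 1) (b 3))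
    (hδ2 : δ (b 2) = (β₂ - β₄) • wedge (b 0) (b 1) + β₅ • wedge (b 0) (b 2)
      - (β₁ - β₅) • wedge (b 1) (b 2) + β₃ • wedge (b 2) (b 3))
    (hδ3 : δ (b 3) = β₆ • wedge (b 0) (b 1) + β₇ • wedge (b 0) (b 2)
      - (β₁ - β₅) • wedge (b 0) (b 3) + β₈ • wedge (b 1) (b 2)
      - (β₁ - β₅) • wedge (b 1) (b 3) - (α + β₄) • wedge (b 2) (b 3)) :
    CoJacobi δ ↔
      (α * β₁ = 0 ∧ α * β₃ = 0 ∧ β₁ * β₈ = 0 ∧ β₃ * β₈ = 0 ∧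
       β₁ * β₂ - (β₂ - β₄) * β₅ + β₃ * β₇ = 0 ∧
       (α + β₄) * (β₂ - β₄) + β₁ * (β₁ - β₅) + β₃ * β₆ = 0) := by
  have ev0 : ∀ (ξ η : Module.Dual ℝ L), dualBr δ ξ η (b 0) =
      α * (ξ (b 0) * η (b 2) - ξ (b 2) * η (b 0)) + α * (ξ (b 1) * η (b 2) - ξ (b 2) * η (b 1)) := by
    intro ξ η
    simp only [dualBr_apply, hδ0, map_add, map_sub, map_smul, lift_wedge, smul_eq_mul]
  have ev1 : ∀ (ξ η : Module.Dual ℝ L), dualBr δ ξ η (b 1) =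
      β₁ * (ξ (b 0) * η (b 1) - ξ (b 1) * η (b 0)) + β₂ * (ξ (b 0) * η (b 2) - ξ (b 2) * η (b 0)) + β₃ * (ξ (b 0) * η (b 3) - ξ (b 3) * η (b 0)) + β₄ * (ξ (b 1) * η (b 2) - ξ (b 2) * η (b 1)) + β₃ * (ξ (b 1) * η (b 3) - ξ (b 3) * η (b 1)) := by
    intro ξ η
    simp only [dualBr_apply, hδ1, map_add, map_sub, map_smul, lift_wedge, smul_eq_mul]
  have ev2 : ∀ (ξ η : Module.Dual ℝ L), dualBr δ ξ η (b 2) =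
      (β₂ - β₄) * (ξ (b 0) * η (b 1) - ξ (b 1) * η (b 0)) + β₅ * (ξ (b 0) * η (b 2) - ξ (b 2) * η (b 0)) - (β₁ - β₅) * (ξ (b 1) * η (b 2) - ξ (b 2) * η (b 1)) + β₃ * (ξ (b 2) * η (b 3) - ξ (b 3) * η (b 2)) := by
    intro ξ η
    simp only [dualBr_apply, hδ2, map_add, map_sub, map_smul, lift_wedge, smul_eq_mul]
  have ev3 : ∀ (ξ η : Module.Dual ℝ L), dualBr δ ξ η (b 3) =
      β₆ * (ξ (b 0) * η (b 1) - ξ (b 1) * η (b 0)) + β₇ * (ξ (b 0) * η (b 2) - ξ (b 2) * η (b 0)) - (β₁ - β₅) * (ξ (b 0) * η (b 3) - ξ (b 3) * η (b 0)) + β₈ * (ξ (b 1) * η (b 2) - ξ (b 2) * η (b 1)) - (β₁ - β₅) * (ξ (b 1) * η (b 3) - ξ (b 3) * η (b 1)) - (α + β₄) * (ξ (b 2) * η (b 3) - ξ (b 3) * η (b 2)) := by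
    intro ξ η
    simp only [dualBr_apply, hδ3, map_add, map_sub, map_smul, lift_wedge, smul_eq_mul]
  constructor
  · rintro ⟨hs, hj⟩
    have e1 := DFunLike.congr_fun (hj (b.coord 0) (b.coord 1) (b.coord 2)) (b 0)
    have e2 := DFunLike.congr_fun (hj (b.coord 0) (b.coord 2) (b.coord 3)) (b 0)
    have e3 := DFunLike.congr_fun (hj (b.coord 0) (b.coord 1) (b.coord 2)) (b 3)
    have e4 := DFunLike.congr_fun (hj (b.coord 1) (b.coord 2) (b.coord 3)) (b 3)
    have e5 := DFunLike.congr_fun (hj (b.coord 0) (b.coord 1) (b.coord 2)) (b 1)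
    have e6 := DFunLike.congr_fun (hj (b.coord 0) (b.coord 1) (b.coord 2)) (b 2)
    simp only [LinearMap.add_apply, LinearMap.zero_apply, ev0, ev1, ev2, ev3,
      Module.Basis.coord_apply, Module.Basis.repr_self, Finsupp.single_apply] at e1 e2 e3 e4 e5 e6
    simp only [Fin.reduceEq, reduceIte] at e1 e2 e3 e4 e5 e6
    ring_nf at e1 e2 e3 e4 e5 e6
    exact ⟨by linarith, by linarith, by linarith, by linarith,
      by linear_combination e5 + e1 / 2 - e4 / 2, by linear_combination -e6⟩
  · rintro ⟨h₁, h₂, h₃, h₄, h₅, h₆⟩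
    constructor
    · intro ξ η
      refine b.ext fun k => ?_
      fin_cases k <;>
        simp only [Fin.mk_zero, Fin.mk_one, Fin.reduceFinMk, LinearMap.neg_apply, Fin.isValue, ev0, ev1, ev2, ev3] <;> ring
    · intro ξ η ζ
      refine b.ext fun l => ?_
      fin_cases l <;>
        simp only [Fin.mk_zero, Fin.mk_one, Fin.reduceFinMk, LinearMap.add_apply, LinearMap.zero_apply, Fin.isValue, ev0, ev1, ev2, ev3]
      · linear_combination ((2)*ξ (b 0)*η (b 1)*ζ (b 2) + (-2)*ξ (b 0)*η (b 2)*ζ (b 1) + (-2)*ξ (b 1)*η (b 0)*ζ (b 2) + (2)*ξ (b 1)*η (b 2)*ζ (b 0) + (2)*ξ (b 2)*η (b 0)*ζ (b 1) + (-2)*ξ (b 2)*η (b 1)*ζ (b 0)) * h₁ + ((-2)*ξ (b 0)*η (b 2)*ζ (b 3) + (2)*ξ (b 0)*η (b 3)*ζ (b 2) + (-2)*ξ (b 1)*η (b 2)*ζ (b 3) + (2)*ξ (b 1)*η (b 3)*ζ (b 2) + (2)*ξ (b 2)*η (b 0)*ζ (b 3) + (2)*ξ (b 2)*η (b 1)*ζ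 (b 3) + (-2)*ξ (b 2)*η (b 3)*ζ (b 0) + (-2)*ξ (b 2)*η (b 3)*ζ (b 1) + (-2)*ξ (b 3)*η (b 0)*ζ (b 2) + (-2)*ξ (b 3)*η (b 1)*ζ (b 2) + (2)*ξ (b 3)*η (b 2)*ζ (b 0) + (2)*ξ (b 3)*η (b 2)*ζ (b 1)) * h₂
      · linear_combination ((-1)*ξ (b 0)*η (b 1)*ζ (b 2) + ξ (b 0)*η (b 2)*ζ (b 1) + ξ (b 1)*η (b 0)*ζ (b 2) + (-1)*ξ (b 1)*η (b 2)*ζ (b 0) + (-1)*ξ (b 2)*η (b 0)*ζ (b 1) + ξ (b 2)*η (b 1)*ζ (b 0)) * h₁ + ((2)*ξ (b 0)*η (b 2)*ζ (b 3) + (-2)*ξ (b 0)*η (b 3)*ζ (b 2) + (2)*ξ (b 1)*η (b 2)*ζ (b 3) + (-2)*ξ (b 1)*η (b 3)*ζ (b 2) + (-2)*ξ (b 2)*η (b 0)*ζ (b 3) + (-2)*ξ (b 2)*η (b 1)*ζ (b 3) + (2)*ξ (b 2)*η (b 3)*ζ (b 0) + (2)*ξ (b 2)*η (b 3)*ζ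 (b 1) + (2)*ξ (b 3)*η (b 0)*ζ (b 2) + (2)*ξ (b 3)*η (b 1)*ζ (b 2) + (-2)*ξ (b 3)*η (b 2)*ζ (b 0) + (-2)*ξ (b 3)*η (b 2)*ζ (b 1)) * h₂ + ((-1)*ξ (b 0)*η (b 1)*ζ (b 2) + ξ (b 0)*η (b 2)*ζ (b 1) + ξ (b 1)*η (b 0)*ζ (b 2) + (-1)*ξ (b 1)*η (b 2)*ζ (b 0) + (-1)*ξ (b 2)*η (b 0)*ζ (b 1) + ξ (b 2)*η (b 1)*ζ (b 0)) * h₄ + (ξ (b 0)*η (b 1)*ζ (b 2) + (-1)*ξ (b 0)*η (b 2)*ζ (b 1) + (-1)*ξ (b 1)*η (b 0)*ζ (b 2) + ξ (b 1)*η (b 2)*ζ (b 0) + ξ (b 2)*η (b 0)*ζ (b 1) + (-1)*ξ (b 2)*η (b 1)*ζ (b 0)) * h₅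
      · linear_combination ((-1)*ξ (b 0)*η (b 1)*ζ (b 2) + ξ (b 0)*η (b 2)*ζ (b 1) + ξ (b 1)*η (b 0)*ζ (b 2) + (-1)*ξ (b 1)*η (b 2)*ζ (b 0) + (-1)*ξ (b 2)*η (b 0)*ζ (b 1) + ξ (b 2)*η (b 1)*ζ (b 0)) * h₆
      · linear_combination ((-1)*ξ (b 0)*η (b 2)*ζ (b 3) + ξ (b 0)*η (b 3)*ζ (b 2) + ξ (b 2)*η (b 0)*ζ (b 3) + (-1)*ξ (b 2)*η (b 3)*ζ (b 0) + (-1)*ξ (b 3)*η (b 0)*ζ (b 2) + ξ (b 3)*η (b 2)*ζ (b 0)) * h₁ + ((2)*ξ (b 0)*η (b 1)*ζ (b 2) + (-2)*ξ (b 0)*η (b 2)*ζ (b 1) + (-2)*ξ (b 1)*η (b 0)*ζ (b 2) + (2)*ξ (b 1)*η (b 2)*ζ (b 0) + (2)*ξ (b 2)*η (b 0)*ζ (b 1) + (-2)*ξ (b 2)*η (b 1)*ζ (b 0)) * h₃ + ((-1)*ξ (b 0)*η (b 2)*ζ (b 3) + ξ (b 0)*η (b 3)*ζ (b 2) + (-2)*ξ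 (b 1)*η (b 2)*ζ (b 3) + (2)*ξ (b 1)*η (b 3)*ζ (b 2) + ξ (b 2)*η (b 0)*ζ (b 3) + (2)*ξ (b 2)*η (b 1)*ζ (b 3) + (-1)*ξ (b 2)*η (b 3)*ζ (b 0) + (-2)*ξ (b 2)*η (b 3)*ζ (b 1) + (-1)*ξ (b 3)*η (b 0)*ζ (b 2) + (-2)*ξ (b 3)*η (b 1)*ζ (b 2) + ξ (b 3)*η (b 2)*ζ (b 0) + (2)*ξ (b 3)*η (b 2)*ζ (b 1)) * h₄ + ((-1)*ξ (b 0)*η (b 2)*ζ (b 3) + ξ (b 0)*η (b 3)*ζ (b 2) + ξ (b 2)*η (b 0)*ζ (b 3) + (-1)*ξ (b 2)*η (b 3)*ζ (b 0) + (-1)*ξ (b 3)*η (b 0)*ζ (b 2) + ξ (b 3)*η (b 2)*ζ (b 0)) * h₅ + ((-1)*ξ (b 0)*η (b 1)*ζ (b 3) + ξ (b 0)*η (b 3)*ζ (b 1) + ξ (b 1)*η (b 0)*ζ (b 3) + (-1)*ξ (b 1)*η (b 3)*ζ (b 0) + (-1)*ξ (b 3)*η (b 0)*ζ (b 1) + ξ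 (b 3)*η (b 1)*ζ (b 0)) * h₆
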